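/- Let G be a group generated by a finite symmetric set S, let d, w ∈ ℕ, and let A be a d×d matrix over ℂ[G] whose entries all have support contained in B_w. Let (F_n) be a Følner exhaustion of G such that dim V(F_n)/|F_n| → c ∈ ℝ. Then for every sequence (Y_k) of nonempty finite subsets of G satisfying |Ω_L(Y_k)|/|Y_k| → 1 as k → ∞ for every L ∈ ℕ, one has dim V(Y_k)/|Y_k| → c as k → ∞. -/

import Mathlib

open Pointwise Filter Topology

section Defs

variable {G : Type*} [Group G]

/-- The word ball of radius `k` with respect to the generating set `S`. -/
noncomputable def wball (S : Finset G) (k : ℕ) : Finset G :=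
  letI := Classical.decEq G
  (insert (1 : G) S) ^ k

/-- The `k`-neighborhood `B_k(F) = B_k * F` of a finite set `F`. -/
noncomputable def wnbhd (S : Finset G) (k : ℕ) (F : Finset G) : Finset G :=
  letI := Classical.decEq G
  wball S k * F

/-- The `k`-interior `Ω_k(F)` of a finite set `F`. -/
noncomputable def winter (S : Finset G) (k : ℕ) (F : Finset G) : Finset G :=
  letI := Classical.decEq G
  F.filter fun p => wball S k * {p} ⊆ F

/-- The boundary `∂F` of a finite set `F`. -/
noncomputable def wbdry (S : Finset G) (F : Finset G) : Finset G :=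
  letI := Classical.decEq G
  F.filter fun p => ∃ s ∈ S, s * p ∉ F

/-- `S` is a finite symmetric generating set. -/
def IsSymmGen (S : Finset G) : Prop :=
  (∀ s ∈ S, s⁻¹ ∈ S) ∧ Subgroup.closure (S : Set G) = ⊤

/-- A Følner exhaustion of `G`. -/
def IsFolnerExhaustion (S : Finset G) (F : ℕ → Finset G) : Prop :=
  (1 : G) ∈ F 0 ∧ Monotone F ∧ (∀ g : G, ∃ n, g ∈ F n) ∧
    Filter.Tendsto (fun n => ((wbdry S (F n)).card : ℝ) / ((F n).card : ℝ))
      Filter.atTop (nhds 0)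

variable {d : ℕ}

/-- The space of vectors supported in `Fs` such that `A.mulVec f` vanishes on `Fv`. -/
noncomputable def kerOn (A : Matrix (Fin d) (Fin d) (MonoidAlgebra ℂ G))
    (Fs Fv : Finset G) : Submodule ℂ (Fin d → MonoidAlgebra ℂ G) where
  carrier := {f | (∀ i, (f i).coeff.support ⊆ Fs) ∧ ∀ i, ∀ g ∈ Fv, (A.mulVec f i).coeff g = 0}
  zero_mem' := ⟨fun i => by simp, fun i g hg => by simp [Matrix.mulVec_zero]⟩
  add_mem' := by
    classical
    rintro f g ⟨hf1, hf2⟩ ⟨hg1, hg2⟩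
    constructor
    · intro i
      exact Finsupp.support_add.trans (Finset.union_subset (hf1 i) (hg1 i))
    · intro i x hx
      have h : A.mulVec (f + g) = A.mulVec f + A.mulVec g := Matrix.mulVec_add A f g
      rw [h]
      show ((A.mulVec f i).coeff + (A.mulVec g i).coeff) x = 0
      rw [Finsupp.add_apply, hf2 i x hx, hg2 i x hx, add_zero]
  smul_mem' := by
    classical
    rintro c f ⟨hf1, hf2⟩
    constructor
    · intro i
      exact (Finsupp.support_smul).trans (hf1 i)
    · intro i x hx
      have h : A.mulVec (c • f) = c • A.mulVec f := Matrix.mulVec_smul A c f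
      rw [h]
      show (c • (A.mulVec f i).coeff) x = 0
      rw [Finsupp.smul_apply, hf2 i x hx, smul_zero]

/-- The space of vectors supported in `Fs` with `A.mulVec f = 0`. -/
noncomputable def kerAll (A : Matrix (Fin d) (Fin d) (MonoidAlgebra ℂ G))
    (Fs : Finset G) : Submodule ℂ (Fin d → MonoidAlgebra ℂ G) where
  carrier := {f | (∀ i, (f i).coeff.support ⊆ Fs) ∧ A.mulVec f = 0}
  zero_mem' := ⟨fun i => by simp, Matrix.mulVec_zero A⟩
  add_mem' := by
    classical
    rintro f g ⟨hf1, hf2⟩ ⟨hg1, hg2⟩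
    exact ⟨fun i => Finsupp.support_add.trans (Finset.union_subset (hf1 i) (hg1 i)),
      by rw [Matrix.mulVec_add, hf2, hg2, add_zero]⟩
  smul_mem' := by
    classical
    rintro c f ⟨hf1, hf2⟩
    exact ⟨fun i => (Finsupp.support_smul).trans (hf1 i),
      by rw [Matrix.mulVec_smul, hf2, smul_zero]⟩

/-- `V(F)`. -/
noncomputable def VSpace (A : Matrix (Fin d) (Fin d) (MonoidAlgebra ℂ G)) (F : Finset G) :
    Submodule ℂ (Fin d → MonoidAlgebra ℂ G) :=
  kerOn A F F

/-- `Z(F)`. -/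
noncomputable def ZSpace (S : Finset G) (w : ℕ) (A : Matrix (Fin d) (Fin d) (MonoidAlgebra ℂ G))
    (F : Finset G) : Submodule ℂ (Fin d → MonoidAlgebra ℂ G) :=
  kerOn A (wnbhd S w F) F

/-- `W(F)`. -/
noncomputable def WSpace (S : Finset G) (w : ℕ) (A : Matrix (Fin d) (Fin d) (MonoidAlgebra ℂ G))
    (F : Finset G) : Submodule ℂ (Fin d → MonoidAlgebra ℂ G) :=
  kerAll A (winter S w F)

/-- `A.mulVec` as a `ℂ`-linear map. -/
noncomputable def mulVecL {R : Type*} [Ring R] [Algebra ℂ R] {d : ℕ}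
    (A : Matrix (Fin d) (Fin d) R) : (Fin d → R) →ₗ[ℂ] (Fin d → R) where
  toFun := A.mulVec
  map_add' := Matrix.mulVec_add A
  map_smul' c v := Matrix.mulVec_smul A c v

/-- Coordinatewise restriction to `F` (multiplication by the indicator of `F`). -/
noncomputable def restrictTo (d : ℕ) (F : Finset G) :
    (Fin d → MonoidAlgebra ℂ G) →ₗ[ℂ] (Fin d → MonoidAlgebra ℂ G) :=
  letI := Classical.decEq G
  { toFun := fun f i => MonoidAlgebra.ofCoeff ((f i).coeff.filter (· ∈ F))
    map_add' := fun f g => by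
      funext i
      exact congrArg MonoidAlgebra.ofCoeff Finsupp.filter_add
    map_smul' := fun c f => by
      funext i
      exact congrArg MonoidAlgebra.ofCoeff Finsupp.filter_smul }

end Defs

section Tiling

variable {ι α : Type*}

/-- An `ε`-disjoint family of finite sets. -/
def EpsDisjoint (I : Finset ι) (A : ι → Finset α) (ε : ℝ) : Prop :=
  ∃ Ab : ι → Finset α, (∀ i ∈ I, Ab i ⊆ A i) ∧
    (∀ i ∈ I, ((1 - ε) * (A i).card : ℝ) ≤ ((Ab i).card : ℝ)) ∧
    ∀ i ∈ I, ∀ j ∈ I, i ≠ j → Disjoint (Ab i) (Ab j)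

/-- The family `(A i)_{i ∈ I}` `a`-covers `X`. -/
def CoversFrac (I : Finset ι) (A : ι → Finset α) (X : Finset α) (a : ℝ) : Prop :=
  letI := Classical.decEq α
  (a * X.card : ℝ) ≤ ((X ∩ I.biUnion A).card : ℝ)

/-- The family `(A i)_{i ∈ I}` `δ`-evenly covers `X`. -/
def EvenCovering (I : Finset ι) (A : ι → Finset α) (X : Finset α) (δ : ℝ) : Prop :=
  letI := Classical.decEq α
  ∃ M : ℕ, 1 ≤ M ∧ (∀ p ∈ X, (I.filter fun i => p ∈ A i).card ≤ M) ∧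
    ((1 - δ) * M * X.card : ℝ) ≤ ∑ i ∈ I, ((A i).card : ℝ)

/-- The right translate `H·x`. -/
noncomputable def rtrans [Mul α] (H : Finset α) (x : α) : Finset α :=
  letI := Classical.decEq α
  H.image (· * x)

end Tiling

section Supp

variable {G : Type*} [Group G]

/-- Vectors all of whose coordinates are supported in `F`. -/
noncomputable def suppIn (d : ℕ) (F : Finset G) :
    Submodule ℂ (Fin d → MonoidAlgebra ℂ G) where
  carrier := {f | ∀ i, (f i).coeff.support ⊆ F}
  zero_mem' := fun i => by simp
  add_mem' := by
    classical
    intro f g hf hg i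
    exact Finsupp.support_add.trans (Finset.union_subset (hf i) (hg i))
  smul_mem' := fun c f hf i => (Finsupp.support_smul).trans (hf i)

end Supp

/-!
For finite `E ⊆ G` let `h(E)` be the dimension of the space `kerAll A E` of vectors supported in
`E` that `A` annihilates. It is invariant under right translation and supermodular, so counting
the translates `E * g` that cover a finite set `Y` (each point is covered `#E` times, and the
translate lies inside `Y` when `g ∈ Ω_k(Y)`) gives `#Ω_k(Y) * h(E) ≤ #E * h(Y)` for `E ⊆ B_k`.
Hence `h(Y_k) / #Y_k` tends to `s = sup_E h(E) / #E` along every tempered sequence. As the entries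
of `A` are supported in `B_w`, `dim V(Y)` exceeds `h(Y)` by at most `d * #(B_w(Y) \ Y)`, which is
at most `d * #B_w * #(Y \ Ω_w(Y))`, so `dim V(Y_k) / #Y_k → s` too. Følner exhaustions are
tempered, which identifies `c` with `s`.
-/

open Finset

section WordBall

variable {G : Type*} [Group G] (S : Finset G)

theorem wball_eq [DecidableEq G] (k : ℕ) : wball S k = insert 1 S ^ k := by
  unfold wball; congr!

theorem one_mem_wball (k : ℕ) : (1 : G) ∈ wball S k := by
  classical
  exact wball_eq S k ▸ one_mem_pow (mem_insert_self 1 S)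

theorem wball_mono : Monotone (wball S) := by
  classical
  intro k l hkl
  simp only [wball_eq]
  exact pow_subset_pow_right (mem_insert_self 1 S) hkl

theorem wball_succ [DecidableEq G] (k : ℕ) : wball S (k + 1) = insert 1 S * wball S k := by
  rw [wball_eq, wball_eq, pow_succ']

theorem mul_mem_wball {k l : ℕ} {a b : G} (ha : a ∈ wball S k) (hb : b ∈ wball S l) :
    a * b ∈ wball S (k + l) := by
  classical
  rw [wball_eq] at *
  rw [pow_add]
  exact mul_mem_mul ha hb

theorem inv_mem_wball (hS : ∀ s ∈ S, s⁻¹ ∈ S) {k : ℕ} {g : G} (hg : g ∈ wball S k) :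
    g⁻¹ ∈ wball S k := by
  classical
  have hinv : (insert 1 S)⁻¹ = insert (1 : G) S := by
    rw [inv_insert, inv_one]
    congr 1
    exact subset_antisymm (fun s hs => by simpa using hS _ (mem_inv'.1 hs))
      (fun s hs => mem_inv'.2 (hS s hs))
  rw [wball_eq] at hg ⊢
  simpa [← inv_pow, hinv] using inv_mem_inv hg

variable {S}

theorem IsSymmGen.exists_mem_wball (hS : IsSymmGen S) (g : G) : ∃ k, g ∈ wball S k := by
  classical
  induction (hS.2 ▸ Subgroup.mem_top g : g ∈ Subgroup.closure (S : Set G))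
    using Subgroup.closure_induction with
  | mem s hs => exact ⟨1, by rw [wball_eq, pow_one]; exact mem_insert_of_mem hs⟩
  | one => exact ⟨0, one_mem_wball S 0⟩
  | mul x y _ _ hx hy =>
    obtain ⟨k, hk⟩ := hx
    obtain ⟨l, hl⟩ := hy
    exact ⟨k + l, mul_mem_wball S hk hl⟩
  | inv x _ hx =>
    obtain ⟨k, hk⟩ := hx
    exact ⟨k, inv_mem_wball S hS.1 hk⟩

theorem IsSymmGen.exists_subset_wball (hS : IsSymmGen S) (E : Finset G) :
    ∃ k, E ⊆ wball S k := by
  choose k hk using hS.exists_mem_wball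
  exact ⟨E.sup k, fun g hg => wball_mono S (le_sup hg) (hk g)⟩

end WordBall

section Interior

variable {G : Type*} [Group G] (S : Finset G)

theorem mem_winter {k : ℕ} {F : Finset G} {p : G} :
    p ∈ winter S k F ↔ p ∈ F ∧ ∀ b ∈ wball S k, b * p ∈ F := by
  classical
  simp [winter, subset_iff, Finset.mem_mul]

theorem winter_subset (k : ℕ) (F : Finset G) : winter S k F ⊆ F :=
  fun _ hp => ((mem_winter S).1 hp).1

theorem mem_wbdry {F : Finset G} {p : G} : p ∈ wbdry S F ↔ p ∈ F ∧ ∃ s ∈ S, s * p ∉ F := by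
  classical
  simp [wbdry]

theorem mem_wnbhd {k : ℕ} {F : Finset G} {q : G} :
    q ∈ wnbhd S k F ↔ ∃ b ∈ wball S k, ∃ p ∈ F, b * p = q := by
  classical
  simp [wnbhd, Finset.mem_mul]

variable [DecidableEq G]

/-- A point of `F` that is pushed out of `F` by a word of length `k` lies within distance `k`
of the boundary, reached by stopping at the last prefix of the word that stays in `F`. -/
theorem sdiff_winter_subset (k : ℕ) (F : Finset G) :
    F \ winter S k F ⊆ (wball S k)⁻¹ * wbdry S F := by
  intro p hp
  obtain ⟨hpF, hpk⟩ := mem_sdiff.1 hp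
  obtain ⟨b, hb, hbp⟩ : ∃ b ∈ wball S k, b * p ∉ F := by
    simpa [mem_winter, hpF] using hpk
  clear hp hpk
  induction k generalizing b with
  | zero => simp_all [wball_eq]
  | succ k ih =>
    have hmono : (wball S k)⁻¹ * wbdry S F ⊆ (wball S (k + 1))⁻¹ * wbdry S F :=
      mul_subset_mul_right (inv_subset_inv (wball_mono S k.le_succ))
    rw [wball_succ] at hb
    obtain ⟨s, hs, b', hb', rfl⟩ := Finset.mem_mul.1 hb
    by_cases hb'p : b' * p ∈ F
    · have hsS : s ∈ S := by
        rcases mem_insert.1 hs with rfl | hsS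
        · simp_all
        · exact hsS
      have hbd : b' * p ∈ wbdry S F := (mem_wbdry S).2 ⟨hb'p, s, hsS, by rwa [← mul_assoc]⟩
      exact hmono (by simpa using mul_mem_mul (inv_mem_inv hb') hbd)
    · exact hmono (ih b' hb' hb'p)

theorem card_sdiff_winter_le (k : ℕ) (F : Finset G) :
    #(F \ winter S k F) ≤ #(wball S k) * #(wbdry S F) := by
  calc #(F \ winter S k F) ≤ #((wball S k)⁻¹ * wbdry S F) :=
        card_le_card (sdiff_winter_subset S k F)
    _ ≤ #(wball S k)⁻¹ * #(wbdry S F) := Finset.card_mul_le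
    _ = #(wball S k) * #(wbdry S F) := by rw [card_inv]

theorem card_wnbhd_sdiff_le (k : ℕ) (F : Finset G) :
    #(wnbhd S k F \ F) ≤ #(wball S k) * #(F \ winter S k F) := by
  have hsub : wnbhd S k F \ F ⊆ wball S k * (F \ winter S k F) := by
    intro q hq
    obtain ⟨hq, hqF⟩ := mem_sdiff.1 hq
    obtain ⟨b, hb, p, hp, rfl⟩ := (mem_wnbhd S).1 hq
    exact mul_mem_mul hb (mem_sdiff.2 ⟨hp, fun hp' => hqF (((mem_winter S).1 hp').2 b hb)⟩)
  exact (card_le_card hsub).trans Finset.card_mul_le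

end Interior

section KernelSpaces

variable {G : Type*} [Group G] {d : ℕ}

noncomputable def evalOn (d : ℕ) (X : Finset G) :
    (Fin d → MonoidAlgebra ℂ G) →ₗ[ℂ] (Fin d → X → ℂ) where
  toFun f i x := (f i).coeff x
  map_add' _ _ := rfl
  map_smul' _ _ := rfl

theorem eq_zero_of_evalOn_eq_zero {X : Finset G} {f : Fin d → MonoidAlgebra ℂ G}
    (hf : f ∈ suppIn d X) (h : evalOn d X f = 0) : f = 0 := by
  funext i
  ext g
  by_contra hg
  exact hg (congrFun (congrFun h i) ⟨g, hf i (Finsupp.mem_support_iff.2 hg)⟩)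

theorem injective_evalOn_comp_subtype (X : Finset G) :
    Function.Injective (evalOn d X ∘ₗ (suppIn d X).subtype) := by
  rw [← LinearMap.ker_eq_bot, LinearMap.ker_eq_bot']
  intro f hf
  exact Subtype.ext (eq_zero_of_evalOn_eq_zero f.2 hf)

instance (X : Finset G) : FiniteDimensional ℂ (suppIn d X) :=
  .of_injective _ (injective_evalOn_comp_subtype X)

theorem finrank_suppIn_le (X : Finset G) : Module.finrank ℂ (suppIn d X) ≤ d * #X := by
  simpa [Module.finrank_pi_fintype, Module.finrank_fintype_fun_eq_card] using
    LinearMap.finrank_le_finrank_of_injective (injective_evalOn_comp_subtype (d := d) X)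

theorem Submodule.finrank_le_finrank_add_finrank_of_ker_le {K V W : Type*} [Field K]
    [AddCommGroup V] [Module K V] [AddCommGroup W] [Module K W] [FiniteDimensional K W]
    {p q : Submodule K V} [FiniteDimensional K p] [FiniteDimensional K q] (φ : V →ₗ[K] W)
    (h : ∀ f ∈ p, φ f = 0 → f ∈ q) :
    Module.finrank K p ≤ Module.finrank K q + Module.finrank K W := by
  have hker : Module.finrank K (LinearMap.ker (φ ∘ₗ p.subtype)) ≤ Module.finrank K q := by
    rw [← Submodule.finrank_map_subtype_eq]
    refine Submodule.finrank_mono ?_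
    rintro _ ⟨f, hf, rfl⟩
    exact h f f.2 hf
  have := (φ ∘ₗ p.subtype).finrank_range_add_finrank_ker
  have := (LinearMap.range (φ ∘ₗ p.subtype)).finrank_le
  omega

variable (A : Matrix (Fin d) (Fin d) (MonoidAlgebra ℂ G))

theorem kerAll_le_suppIn (E : Finset G) : kerAll A E ≤ suppIn d E := fun _ hf => hf.1

theorem kerAll_le_VSpace (E : Finset G) : kerAll A E ≤ VSpace A E :=
  fun f hf => ⟨hf.1, fun i g _ => by rw [hf.2]; rfl⟩

instance (E : Finset G) : FiniteDimensional ℂ (kerAll A E) :=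
  Submodule.finiteDimensional_of_le (kerAll_le_suppIn A E)

instance (E : Finset G) : FiniteDimensional ℂ (VSpace A E) :=
  Submodule.finiteDimensional_of_le (show VSpace A E ≤ suppIn d E from fun _ hf => hf.1)

theorem kerAll_mono {E E' : Finset G} (h : E ⊆ E') : kerAll A E ≤ kerAll A E' :=
  fun _ hf => ⟨fun i => (hf.1 i).trans h, hf.2⟩

theorem kerAll_inter [DecidableEq G] (E E' : Finset G) :
    kerAll A (E ∩ E') = kerAll A E ⊓ kerAll A E' :=
  le_antisymm (le_inf (kerAll_mono A inter_subset_left) (kerAll_mono A inter_subset_right))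
    fun _ hf => ⟨fun i => subset_inter (hf.1.1 i) (hf.2.1 i), hf.1.2⟩

theorem finrank_kerAll_empty : Module.finrank ℂ (kerAll A (∅ : Finset G)) = 0 :=
  Nat.eq_zero_of_le_zero <| by
    simpa using
      (Submodule.finrank_mono (kerAll_le_suppIn A ∅)).trans (finrank_suppIn_le (d := d) ∅)

end KernelSpaces

section Translation

variable {G : Type*} [Group G] {d : ℕ}

noncomputable def rightTranslate (d : ℕ) (g : G) :
    (Fin d → MonoidAlgebra ℂ G) →ₗ[ℂ] (Fin d → MonoidAlgebra ℂ G) :=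
  LinearMap.pi fun i => LinearMap.mulRight ℂ (MonoidAlgebra.single g 1) ∘ₗ LinearMap.proj i

theorem rightTranslate_apply (g : G) (f : Fin d → MonoidAlgebra ℂ G) (i : Fin d) :
    rightTranslate d g f i = f i * MonoidAlgebra.single g 1 := rfl

theorem rightTranslate_inv_apply (g : G) (f : Fin d → MonoidAlgebra ℂ G) :
    rightTranslate d g⁻¹ (rightTranslate d g f) = f := by
  funext i
  simp [rightTranslate_apply, mul_assoc, MonoidAlgebra.single_mul_single,
    ← MonoidAlgebra.one_def]

theorem rightTranslate_injective (g : G) : Function.Injective (rightTranslate (G := G) d g) :=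
  Function.LeftInverse.injective (rightTranslate_inv_apply g)

theorem mulVec_rightTranslate (A : Matrix (Fin d) (Fin d) (MonoidAlgebra ℂ G)) (g : G)
    (f : Fin d → MonoidAlgebra ℂ G) :
    A.mulVec (rightTranslate d g f) = rightTranslate d g (A.mulVec f) := by
  funext i
  simp only [rightTranslate_apply, Matrix.mulVec, dotProduct, sum_mul, mul_assoc]

theorem rtrans_eq [DecidableEq G] (E : Finset G) (g : G) : rtrans E g = E.image (· * g) := by
  unfold rtrans; congr!

theorem mem_rtrans {E : Finset G} {g a : G} : a ∈ rtrans E g ↔ a * g⁻¹ ∈ E := by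
  classical
  simp [rtrans]

theorem rtrans_rtrans_inv (E : Finset G) (g : G) : rtrans (rtrans E g) g⁻¹ = E := by
  ext a
  simp [mem_rtrans]

theorem rightTranslate_mem_kerAll {A : Matrix (Fin d) (Fin d) (MonoidAlgebra ℂ G)}
    {E : Finset G} {f : Fin d → MonoidAlgebra ℂ G} (hf : f ∈ kerAll A E) (g : G) :
    rightTranslate d g f ∈ kerAll A (rtrans E g) := by
  refine ⟨fun i => ?_, by rw [mulVec_rightTranslate, hf.2, map_zero]⟩
  rw [rightTranslate_apply, MonoidAlgebra.support_coeff_mul_single _ _ (by simp)]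
  intro a ha
  obtain ⟨e, he, rfl⟩ := mem_map.1 ha
  simpa [mem_rtrans] using hf.1 i he

theorem finrank_kerAll_rtrans (A : Matrix (Fin d) (Fin d) (MonoidAlgebra ℂ G)) (E : Finset G)
    (g : G) : Module.finrank ℂ (kerAll A (rtrans E g)) = Module.finrank ℂ (kerAll A E) := by
  have hle (E : Finset G) (g : G) :
      Module.finrank ℂ (kerAll A E) ≤ Module.finrank ℂ (kerAll A (rtrans E g)) := by
    refine LinearMap.finrank_le_finrank_of_injective
      (f := (rightTranslate d g).restrict fun f hf => rightTranslate_mem_kerAll hf g) ?_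
    exact fun f f' h => Subtype.ext (rightTranslate_injective g (congrArg Subtype.val h))
  refine le_antisymm ?_ (hle E g)
  have := hle (rtrans E g) g⁻¹
  rwa [rtrans_rtrans_inv] at this

end Translation

/-- A Shearer-type inequality; the induction removes one point of `Y` at a time. -/
theorem sum_le_mul_of_supermodular {α ι : Type*} [DecidableEq α] {φ : Finset α → ℝ}
    (h_empty : φ ∅ = 0) (h_super : ∀ s t, φ s + φ t ≤ φ (s ∪ t) + φ (s ∩ t))
    {D : Finset ι} {M : ℕ} {Y : Finset α} {B : ι → Finset α} (hB : ∀ i ∈ D, B i ⊆ Y)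
    (hM : ∀ y ∈ Y, #{i ∈ D | y ∈ B i} = M) :
    ∑ i ∈ D, φ (B i) ≤ M * φ Y := by
  induction Y using Finset.induction_on generalizing B with
  | empty => simp_all [subset_empty]
  | @insert y Y hy ih =>
    have hB' : ∀ i ∈ D, (B i).erase y ⊆ Y := fun i hi =>
      (erase_subset_erase y (hB i hi)).trans (erase_insert hy).subset
    have hM' : ∀ z ∈ Y, #{i ∈ D | z ∈ (B i).erase y} = M := fun z hz => by
      simpa [ne_of_mem_of_not_mem hz hy] using hM z (mem_insert_of_mem hz)
    have hstep : ∀ i ∈ D, φ (B i) ≤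
        φ ((B i).erase y) + if y ∈ B i then φ (insert y Y) - φ Y else 0 := by
      intro i hi
      split_ifs with hyB
      · have hunion : B i ∪ Y = insert y Y :=
          subset_antisymm (union_subset (hB i hi) (subset_insert y Y))
            (insert_subset (mem_union_left _ hyB) subset_union_right)
        have hinter : B i ∩ Y = (B i).erase y := by
          ext z
          have := @hB i hi z
          constructor <;> aesop
        have := h_super (B i) Y
        rw [hunion, hinter] at this
        linarith
      · rw [erase_eq_of_notMem hyB, add_zero]
    calc ∑ i ∈ D, φ (B i)
        ≤ ∑ i ∈ D, (φ ((B i).erase y) + if y ∈ B i then φ (insert y Y) - φ Y else 0) :=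
          sum_le_sum hstep
      _ = ∑ i ∈ D, φ ((B i).erase y) + M * (φ (insert y Y) - φ Y) := by
          rw [sum_add_distrib, sum_ite, sum_const_zero, add_zero, sum_const,
            hM y (mem_insert_self y Y), nsmul_eq_mul]
      _ ≤ M * φ Y + M * (φ (insert y Y) - φ Y) := by gcongr; exact ih hB' hM'
      _ = M * φ (insert y Y) := by ring

section Density

variable {G : Type*} [Group G] {d : ℕ} (A : Matrix (Fin d) (Fin d) (MonoidAlgebra ℂ G))

theorem finrank_kerAll_add_le [DecidableEq G] (E E' : Finset G) :
    Module.finrank ℂ (kerAll A E) + Module.finrank ℂ (kerAll A E') ≤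
      Module.finrank ℂ (kerAll A (E ∪ E')) + Module.finrank ℂ (kerAll A (E ∩ E')) := by
  rw [← Submodule.finrank_sup_add_finrank_inf_eq, kerAll_inter]
  gcongr
  exact Submodule.finrank_mono <|
    sup_le (kerAll_mono A subset_union_left) (kerAll_mono A subset_union_right)

/-- The translates `E * g` meeting `Y` cover each point of `Y` exactly `#E` times, and lie
inside `Y` for `g ∈ Ω_k(Y)`. -/
theorem card_winter_mul_finrank_kerAll_le {S : Finset G} {k : ℕ} {E : Finset G}
    (hE : E ⊆ wball S k) (Y : Finset G) :
    #(winter S k Y) * Module.finrank ℂ (kerAll A E) ≤ #E * Module.finrank ℂ (kerAll A Y) := by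
  classical
  obtain rfl | ⟨e, he⟩ := E.eq_empty_or_nonempty
  · simp [finrank_kerAll_empty]
  have hcover : ∑ g ∈ E⁻¹ * Y, (Module.finrank ℂ (kerAll A (rtrans E g ∩ Y)) : ℝ) ≤
      #E * Module.finrank ℂ (kerAll A Y) := by
    refine sum_le_mul_of_supermodular (φ := fun s => (Module.finrank ℂ (kerAll A s) : ℝ))
      (by simp [finrank_kerAll_empty])
      (fun s t => by exact_mod_cast finrank_kerAll_add_le A s t)
      (fun _ _ => inter_subset_right) fun y hy => ?_
    have : {g ∈ E⁻¹ * Y | y ∈ rtrans E g ∩ Y} = rtrans E⁻¹ y := by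
      ext g
      simp only [mem_filter, mem_inter, mem_rtrans, mem_inv', mul_inv_rev, inv_inv, hy, and_true]
      exact and_iff_right_of_imp fun h => by simpa using Finset.mul_mem_mul (inv_mem_inv h) hy
    rw [this, rtrans_eq, card_image_of_injective _ (mul_left_injective y), card_inv]
  have hinterior : ∀ p ∈ winter S k Y, rtrans E p ∩ Y = rtrans E p := fun p hp =>
    inter_eq_left.2 fun a ha => by
      simpa using ((mem_winter S).1 hp).2 _ (hE (mem_rtrans.1 ha))
  have hsub : winter S k Y ⊆ E⁻¹ * Y := fun p hp => by
    simpa using Finset.mul_mem_mul (inv_mem_inv he) (((mem_winter S).1 hp).2 e (hE he))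
  suffices (#(winter S k Y) * Module.finrank ℂ (kerAll A E) : ℝ) ≤
      #E * Module.finrank ℂ (kerAll A Y) by exact_mod_cast this
  calc (#(winter S k Y) * Module.finrank ℂ (kerAll A E) : ℝ)
        = ∑ p ∈ winter S k Y, (Module.finrank ℂ (kerAll A (rtrans E p ∩ Y)) : ℝ) := by
        rw [sum_congr rfl fun p hp => by rw [hinterior p hp, finrank_kerAll_rtrans],
          sum_const, nsmul_eq_mul]
    _ ≤ ∑ g ∈ E⁻¹ * Y, (Module.finrank ℂ (kerAll A (rtrans E g ∩ Y)) : ℝ) :=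
        sum_le_sum_of_subset_of_nonneg hsub fun _ _ _ => Nat.cast_nonneg _
    _ ≤ #E * Module.finrank ℂ (kerAll A Y) := hcover

/-- The empty set contributes `0 / 0 = 0`, harmless since every term is nonnegative. -/
noncomputable def kerDensity : ℝ :=
  ⨆ E : Finset G, (Module.finrank ℂ (kerAll A E) : ℝ) / #E

theorem bddAbove_finrank_kerAll_div_card :
    BddAbove (Set.range fun E : Finset G => (Module.finrank ℂ (kerAll A E) : ℝ) / #E) := by
  refine ⟨d, Set.forall_mem_range.2 fun E => div_le_of_le_mul₀ (by positivity) (by positivity) ?_⟩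
  exact_mod_cast (Submodule.finrank_mono (kerAll_le_suppIn A E)).trans (finrank_suppIn_le E)

theorem finrank_kerAll_div_card_le_kerDensity (E : Finset G) :
    (Module.finrank ℂ (kerAll A E) : ℝ) / #E ≤ kerDensity A :=
  le_ciSup (bddAbove_finrank_kerAll_div_card A) E

theorem winter_ratio_mul_kerAll_ratio_le {S : Finset G} {k : ℕ} {E : Finset G}
    (hE : E ⊆ wball S k) (Y : Finset G) :
    (#(winter S k Y) : ℝ) / #Y * ((Module.finrank ℂ (kerAll A E) : ℝ) / #E) ≤
      (Module.finrank ℂ (kerAll A Y) : ℝ) / #Y := by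
  obtain rfl | hE₀ := E.eq_empty_or_nonempty
  · simp only [card_empty, Nat.cast_zero, div_zero, mul_zero]
    positivity
  have hcard : (0 : ℝ) < #E := by exact_mod_cast hE₀.card_pos
  have key : (#(winter S k Y) * Module.finrank ℂ (kerAll A E) : ℝ) ≤
      #E * Module.finrank ℂ (kerAll A Y) := by
    exact_mod_cast card_winter_mul_finrank_kerAll_le A hE Y
  calc (#(winter S k Y) : ℝ) / #Y * ((Module.finrank ℂ (kerAll A E) : ℝ) / #E)
      = (#(winter S k Y) * Module.finrank ℂ (kerAll A E) : ℝ) / (#Y * #E) := div_mul_div_comm ..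
    _ ≤ (#E * Module.finrank ℂ (kerAll A Y) : ℝ) / (#Y * #E) := by gcongr
    _ = (Module.finrank ℂ (kerAll A Y) : ℝ) / #Y := by field_simp

def IsTempered (S : Finset G) (T : ℕ → Finset G) : Prop :=
  ∀ L : ℕ, Tendsto (fun k => (#(winter S L (T k)) : ℝ) / #(T k)) atTop (𝓝 1)

variable {S : Finset G} {T : ℕ → Finset G}

theorem IsTempered.tendsto_finrank_kerAll_div_card (hS : IsSymmGen S) (hT : IsTempered S T) :
    Tendsto (fun k => (Module.finrank ℂ (kerAll A (T k)) : ℝ) / #(T k)) atTop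
      (𝓝 (kerDensity A)) := by
  refine tendsto_order.2 ⟨fun a ha => ?_, fun a ha => .of_forall fun k =>
    (finrank_kerAll_div_card_le_kerDensity A (T k)).trans_lt ha⟩
  obtain ⟨E, hE⟩ := exists_lt_of_lt_ciSup ha
  obtain ⟨L, hL⟩ := hS.exists_subset_wball E
  have hlim := (hT L).mul_const ((Module.finrank ℂ (kerAll A E) : ℝ) / #E)
  rw [one_mul] at hlim
  filter_upwards [hlim.eventually_const_lt hE] with k hk
  exact hk.trans_le (winter_ratio_mul_kerAll_ratio_le A hL (T k))

end Density

section VSpace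

variable {G : Type*} [Group G] {d : ℕ} {A : Matrix (Fin d) (Fin d) (MonoidAlgebra ℂ G)}
  {S : Finset G} {w : ℕ}

theorem support_mulVec_subset_wnbhd (hA : ∀ i j, (A i j).coeff.support ⊆ wball S w)
    {T : Finset G} {f : Fin d → MonoidAlgebra ℂ G} (hf : f ∈ suppIn d T) (i : Fin d) :
    (A.mulVec f i).coeff.support ⊆ wnbhd S w T := by
  classical
  intro g hg
  simp only [Matrix.mulVec, dotProduct, MonoidAlgebra.coeff_sum] at hg
  obtain ⟨j, -, hj⟩ := Finsupp.mem_support_finsetSum g hg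
  obtain ⟨b, hb, p, hp, rfl⟩ := Finset.mem_mul.1 (MonoidAlgebra.support_coeff_mul_subset _ _ hj)
  exact (mem_wnbhd S).2 ⟨b, hA i j hb, p, hf j hp, rfl⟩

/-- For `f ∈ V(T)` the vector `A f` is supported in `B_w(T) \ T`, so restricting `A f` to that
set has kernel `kerAll A T` on `V(T)`. -/
theorem finrank_VSpace_le [DecidableEq G] (hA : ∀ i j, (A i j).coeff.support ⊆ wball S w)
    (T : Finset G) :
    Module.finrank ℂ (VSpace A T) ≤
      Module.finrank ℂ (kerAll A T) + d * #(wnbhd S w T \ T) := by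
  have := Submodule.finrank_le_finrank_add_finrank_of_ker_le
    (p := VSpace A T) (q := kerAll A T) (evalOn d (wnbhd S w T \ T) ∘ₗ mulVecL A) ?_
  · simpa [Module.finrank_pi_fintype, Module.finrank_fintype_fun_eq_card] using this
  rintro f ⟨hfT, hfA⟩ hf
  refine ⟨hfT, funext fun i => MonoidAlgebra.coeff_injective <| Finsupp.ext fun g => ?_⟩
  by_cases hgT : g ∈ T
  · exact hfA i g hgT
  by_cases hg : g ∈ wnbhd S w T
  · exact congrFun (congrFun hf i) ⟨g, mem_sdiff.2 ⟨hg, hgT⟩⟩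
  · exact Finsupp.notMem_support_iff.1 fun h => hg (support_mulVec_subset_wnbhd hA hfT i h)

theorem finrank_VSpace_div_card_le (hA : ∀ i j, (A i j).coeff.support ⊆ wball S w)
    (T : Finset G) :
    (Module.finrank ℂ (VSpace A T) : ℝ) / #T ≤ (Module.finrank ℂ (kerAll A T) : ℝ) / #T +
      d * #(wball S w) * (1 - (#(winter S w T) : ℝ) / #T) := by
  classical
  have hle : Module.finrank ℂ (VSpace A T) ≤ Module.finrank ℂ (kerAll A T) +
      d * #(wball S w) * (#T - #(winter S w T)) := by
    rw [mul_assoc, ← card_sdiff_of_subset (winter_subset S w T)]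
    exact (finrank_VSpace_le hA T).trans (by gcongr; exact card_wnbhd_sdiff_le S w T)
  have hle' : (Module.finrank ℂ (VSpace A T) : ℝ) ≤ Module.finrank ℂ (kerAll A T) +
      d * #(wball S w) * ((#T : ℝ) - #(winter S w T)) := by
    rw [← Nat.cast_sub (card_le_card (winter_subset S w T))]
    exact_mod_cast hle
  calc (Module.finrank ℂ (VSpace A T) : ℝ) / #T
      ≤ (Module.finrank ℂ (kerAll A T) + d * #(wball S w) * ((#T : ℝ) - #(winter S w T))) / #T :=
        by gcongr
    _ = (Module.finrank ℂ (kerAll A T) : ℝ) / #T +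
          d * #(wball S w) * ((#T : ℝ) / #T - (#(winter S w T) : ℝ) / #T) := by ring
    _ ≤ _ := by gcongr; exact div_self_le_one _

theorem IsTempered.tendsto_finrank_VSpace_div_card {T : ℕ → Finset G} (hS : IsSymmGen S)
    (hA : ∀ i j, (A i j).coeff.support ⊆ wball S w) (hT : IsTempered S T) :
    Tendsto (fun k => (Module.finrank ℂ (VSpace A (T k)) : ℝ) / #(T k)) atTop
      (𝓝 (kerDensity A)) := by
  have hker := hT.tendsto_finrank_kerAll_div_card A hS
  have hupper := hker.add (((tendsto_const_nhds (x := (1 : ℝ))).sub (hT w)).const_mul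
    ((d : ℝ) * #(wball S w)))
  rw [sub_self, mul_zero, add_zero] at hupper
  refine tendsto_of_tendsto_of_tendsto_of_le_of_le hker hupper (fun k => ?_)
    (fun k => finrank_VSpace_div_card_le hA (T k))
  gcongr
  exact Submodule.finrank_mono (kerAll_le_VSpace A (T k))

end VSpace

theorem IsFolnerExhaustion.isTempered {G : Type*} [Group G] {S : Finset G}
    {F : ℕ → Finset G} (hF : IsFolnerExhaustion S F) : IsTempered S F := by
  classical
  intro L
  have hlower := ((hF.2.2.2.const_mul (#(wball S L) : ℝ)).const_sub 1)
  rw [mul_zero, sub_zero] at hlower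
  refine tendsto_of_tendsto_of_tendsto_of_le_of_le hlower tendsto_const_nhds (fun n => ?_)
    (fun n => div_le_one_of_le₀ (Nat.cast_le.2 (card_le_card (winter_subset S L (F n))))
      (Nat.cast_nonneg _))
  have hpos : (0 : ℝ) < #(F n) := by
    exact_mod_cast card_pos.2 ⟨1, hF.2.1 (Nat.zero_le n) hF.1⟩
  have hcount : (#(F n) : ℝ) - #(winter S L (F n)) ≤ #(wball S L) * #(wbdry S (F n)) := by
    rw [← Nat.cast_sub (card_le_card (winter_subset S L (F n))),
      ← card_sdiff_of_subset (winter_subset S L (F n))]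
    exact_mod_cast card_sdiff_winter_le S L (F n)
  rw [mul_div_assoc', sub_div' hpos.ne', div_le_div_iff_of_pos_right hpos]
  linarith

theorem dim_convergence_along_tempered_sequences_general {G : Type*} [Group G] (S : Finset G)
    (hS : IsSymmGen S) (d w : ℕ) (A : Matrix (Fin d) (Fin d) (MonoidAlgebra ℂ G))
    (hA : ∀ i j, (A i j).coeff.support ⊆ wball S w)
    (F : ℕ → Finset G) (hF : IsFolnerExhaustion S F) (c : ℝ)
    (hc : Tendsto (fun n => (Module.finrank ℂ (VSpace A (F n)) : ℝ) / ((F n).card : ℝ))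
      atTop (𝓝 c))
    (Y : ℕ → Finset G)
    (hYint : ∀ L : ℕ,
      Tendsto (fun k => ((winter S L (Y k)).card : ℝ) / ((Y k).card : ℝ)) atTop (𝓝 1)) :
    Tendsto (fun k => (Module.finrank ℂ (VSpace A (Y k)) : ℝ) / ((Y k).card : ℝ)) atTop (𝓝 c) := by
  rw [tendsto_nhds_unique hc (hF.isTempered.tendsto_finrank_VSpace_div_card hS hA)]
  exact IsTempered.tendsto_finrank_VSpace_div_card hS hA hYint

theorem dim_convergence_along_tempered_sequences {G : Type*} [Group G] (S : Finset G)
    (hS : IsSymmGen S) (d w : ℕ) (A : Matrix (Fin d) (Fin d) (MonoidAlgebra ℂ G))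
    (hA : ∀ i j, (A i j).coeff.support ⊆ wball S w)
    (F : ℕ → Finset G) (hF : IsFolnerExhaustion S F) (c : ℝ)
    (hc : Tendsto (fun n => (Module.finrank ℂ (VSpace A (F n)) : ℝ) / ((F n).card : ℝ))
      atTop (𝓝 c))
    (Y : ℕ → Finset G) (hY : ∀ k, (Y k).Nonempty)
    (hYint : ∀ L : ℕ,
      Tendsto (fun k => ((winter S L (Y k)).card : ℝ) / ((Y k).card : ℝ)) atTop (𝓝 1)) :
    Tendsto (fun k => (Module.finrank ℂ (VSpace A (Y k)) : ℝ) / ((Y k).card : ℝ)) atTop (𝓝 c) :=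
  dim_convergence_along_tempered_sequences_general S hS d w A hA F hF c hc Y hYint
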